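/- arXiv:2501.10644 — 3 statements merged into one kernel-verified Lean document; each statement's English description precedes it below -/
import Mathlib

section
/- Consider N UAVs with computation times T_n^{comp} ≥ 0, payload sizes d_n > 0, total bandwidth B > 0, and SNR constants c_n > 0, and define the completion time of UAV n under bandwidth fraction γ_n > 0 as T_n(γ_n) = T_n^{comp} + d_n·ln 2 / (B · f_{c_n}(γ_n)). Suppose there exists T > max_n T_n^{comp} with d_n·ln 2/(B(T − T_n^{comp})) < c_n for all n. Then there exists a unique T* > max_n T_n^{comp} such that Σ_{n=1}^N γ_n(T*) = 1, where γ_n(T) denotes the unique γ > 0 with f_{c_n}(γ) = d_n·ln 2/(B(T − T_n^{comp})); moreover the allocation γ_n* = γ_n(T*) is the unique minimizer of max_n T_n(γ_n) over all allocations γ ∈ (0,∞)^N with Σ_n γ_n ≤ 1, and the optimal value equals T*. -/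
/-!
Write `T_n(γ) = T_n^comp + d_n ln 2 / (B f_{c_n}(γ))`. Since `f_c` is `c` times a secant slope
`log (1 + u) / u` of the concave logarithm (with `u = c / γ`), it increases strictly on `(0, ∞)`
and stays below `c`; so `T_n` is a strictly decreasing map of `(0, ∞)` into `(L_n, ∞)`, with
`L_n = T_n^comp + d_n ln 2 / (B c_n)`, and `γ_n(·)` is its inverse on `(L_n, ∞)`. Being a
monotone bijection onto the interval `(0, ∞)`, `γ_n(·)` is continuous and strictly decreasing,
hence so is the total share `Σ_n γ_n(T)` on `T > max_n L_n`; it is at least `1` near `max_n L_n`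
and at most `1` for large `T`, which gives a unique `T*`. If an allocation with `Σ γ_n ≤ 1` had
all `T_n(γ_n) < T*`, then `γ_n > γ_n(T*)` for every `n` and the shares would sum to more than
`1`; if all `T_n(γ_n) ≤ T*`, then `γ_n ≥ γ_n(T*)`, and the sums force equality.
-/

open Real Set Topology

noncomputable def fdmaRate (c γ : ℝ) : ℝ := γ * log (1 + c / γ)

section FdmaRate

variable {c γ : ℝ}

theorem fdmaRate_pos (hc : 0 < c) (hγ : 0 < γ) : 0 < fdmaRate c γ :=
  mul_pos hγ (log_pos (by have := div_pos hc hγ; linarith))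

theorem fdmaRate_lt (hc : 0 < c) (hγ : 0 < γ) : fdmaRate c γ < c := by
  have hu : 0 < c / γ := div_pos hc hγ
  calc fdmaRate c γ < γ * (c / γ) := by
        refine mul_lt_mul_of_pos_left ?_ hγ
        linarith [log_lt_sub_one_of_pos (x := 1 + c / γ) (by linarith) (by linarith)]
    _ = c := mul_div_cancel₀ c hγ.ne'

theorem strictMonoOn_fdmaRate (hc : 0 < c) : StrictMonoOn (fdmaRate c) (Ioi 0) := by
  intro γ₁ (h₁ : 0 < γ₁) γ₂ (h₂ : 0 < γ₂) h
  have slope : ∀ γ, 0 < γ →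
      fdmaRate c γ = c * ((log (1 + c / γ) - log 1) / (1 + c / γ - 1)) := by
    intro γ hγ
    simp only [fdmaRate, log_one, sub_zero, add_sub_cancel_left]
    field_simp
  have hu : c / γ₂ < c / γ₁ := div_lt_div_of_pos_left hc h₁ h
  rw [slope γ₁ h₁, slope γ₂ h₂]
  refine mul_lt_mul_of_pos_left ?_ hc
  have hu₂ : 0 < c / γ₂ := div_pos hc h₂
  exact strictConcaveOn_log_Ioi.secant_strict_mono (a := 1) (mem_Ioi.mpr one_pos)
    (mem_Ioi.mpr (by linarith)) (mem_Ioi.mpr (by linarith)) (by linarith) (by linarith)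
    (by linarith)

end FdmaRate

section CompletionTime

variable {t k B c : ℝ}

theorem strictAntiOn_add_div_fdmaRate (hk : 0 < k) (hB : 0 < B) (hc : 0 < c) :
    StrictAntiOn (fun γ => t + k / (B * fdmaRate c γ)) (Ioi 0) := by
  intro γ₁ h₁ γ₂ h₂ h
  have := (strictMonoOn_fdmaRate hc) h₁ h₂ h
  have := fdmaRate_pos hc h₁
  dsimp only
  gcongr

theorem add_div_lt_add_div_fdmaRate (hk : 0 < k) (hB : 0 < B) (hc : 0 < c) (hγ : 0 < γ) :
    t + k / (B * c) < t + k / (B * fdmaRate c γ) := by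
  have := fdmaRate_pos hc hγ
  have := fdmaRate_lt hc hγ
  gcongr

theorem lt_and_div_lt_iff (hk : 0 < k) (hB : 0 < B) (hc : 0 < c) {T : ℝ} :
    (t < T ∧ k / (B * (T - t)) < c) ↔ t + k / (B * c) < T := by
  constructor
  · rintro ⟨hT, h⟩
    rw [div_lt_iff₀ (mul_pos hB (sub_pos.mpr hT))] at h
    rw [← lt_sub_iff_add_lt', div_lt_iff₀ (by positivity)]
    linarith
  · intro h
    have hkBc : 0 < k / (B * c) := by positivity
    have hT : 0 < T - t := by linarith
    refine ⟨by linarith, ?_⟩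
    rw [← lt_sub_iff_add_lt', div_lt_iff₀ (by positivity)] at h
    rw [div_lt_iff₀ (by positivity)]
    linarith

theorem add_div_mul_div_mul_sub {T : ℝ} (hk : 0 < k) (hB : 0 < B) (hT : t < T) :
    t + k / (B * (k / (B * (T - t)))) = T := by
  have : T - t ≠ 0 := sub_ne_zero.mpr hT.ne'
  field_simp
  ring

end CompletionTime

section InversePair

variable {α β : Type*} [LinearOrder α] [LinearOrder β] {φ : α → β} {g : β → α} {s : Set α}
  {t : Set β}

theorem StrictAntiOn.strictAntiOn_of_rightInvOn (hφ : StrictAntiOn φ s) (hg : MapsTo g t s)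
    (hinv : RightInvOn g φ t) : StrictAntiOn g t := fun T₁ h₁ T₂ h₂ h => by
  rwa [← hφ.lt_iff_gt (hg h₁) (hg h₂), hinv h₁, hinv h₂]

theorem StrictAntiOn.bijOn_of_rightInvOn (hφ : StrictAntiOn φ s) (hφst : MapsTo φ s t)
    (hg : MapsTo g t s) (hinv : RightInvOn g φ t) : BijOn g t s :=
  InvOn.bijOn ⟨hinv, hφ.injOn.rightInvOn_of_leftInvOn hinv hφst hg⟩ hg hφst

end InversePair

theorem continuousAt_of_antitoneOn_of_image_mem_nhds {α β : Type*} [LinearOrder α]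
    [TopologicalSpace α] [OrderTopology α] [LinearOrder β] [TopologicalSpace β] [OrderTopology β]
    [DenselyOrdered β] {f : α → β} {s : Set α} {a : α} (h_anti : AntitoneOn f s) (hs : s ∈ 𝓝 a)
    (hfs : f '' s ∈ 𝓝 (f a)) : ContinuousAt f a :=
  continuousAt_of_monotoneOn_of_image_mem_nhds (β := βᵒᵈ) h_anti.dual_right hs hfs

section SumOfInverses

variable {ι : Type*} [Fintype ι] {g : ι → ℝ → ℝ} {L : ι → ℝ}

theorem strictAntiOn_sum [Nonempty ι] (hg : ∀ i, StrictAntiOn (g i) (Ioi (L i))) :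
    StrictAntiOn (fun T => ∑ i, g i T) {T | ∀ i, L i < T} := fun _ h₁ _ h₂ h =>
  Finset.sum_lt_sum_of_nonempty Finset.univ_nonempty fun i _ => hg i (h₁ i) (h₂ i) h

theorem exists_sum_eq_one [Nonempty ι] (hg : ∀ i, StrictAntiOn (g i) (Ioi (L i)))
    (himage : ∀ i, g i '' Ioi (L i) = Ioi 0) : ∃ T, (∀ i, L i < T) ∧ ∑ i, g i T = 1 := by
  have hpos : ∀ i T, L i < T → 0 < g i T := fun i T hT =>
    (himage i).subset (mem_image_of_mem (g i) (mem_Ioi.mpr hT))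
  have hsolve : ∀ i y, 0 < y → ∃ T, L i < T ∧ g i T = y := fun i y hy =>
    (himage i).symm.subset (mem_Ioi.mpr hy)
  obtain ⟨i₀, hi₀⟩ := Finite.exists_max L
  have hdom : ∀ {T}, L i₀ < T → ∀ i, L i < T := fun hT i => (hi₀ i).trans_lt hT
  have hcont : ContinuousOn (fun T => ∑ i, g i T) (Ioi (L i₀)) := by
    refine continuousOn_finsetSum _ fun i _ T hT => ContinuousAt.continuousWithinAt ?_
    refine continuousAt_of_antitoneOn_of_image_mem_nhds (hg i).antitoneOn
      (Ioi_mem_nhds (hdom hT i)) ?_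
    rw [himage i]
    exact Ioi_mem_nhds (hpos i T (hdom hT i))
  -- Bracket the root: at `T j` every share is at most `1 / |ι|`; at `T₀` the share of the
  -- coordinate with the largest threshold alone is `1`.
  have hcard : (0 : ℝ) < Fintype.card ι := Nat.cast_pos.mpr Fintype.card_pos
  choose T hLT hgT using fun i => hsolve i (1 / Fintype.card ι) (by positivity)
  obtain ⟨j, hj⟩ := Finite.exists_max T
  obtain ⟨T₀, hT₀, hgT₀⟩ := hsolve i₀ 1 one_pos
  have hlow : ∑ i, g i (T j) ≤ 1 := by
    calc ∑ i, g i (T j) ≤ ∑ _i : ι, 1 / (Fintype.card ι : ℝ) := Finset.sum_le_sum fun i _ =>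
          hgT i ▸ (hg i).antitoneOn (hLT i) ((hLT i).trans_le (hj i)) (hj i)
      _ = 1 := by simp [Finset.card_univ]
  have hhigh : 1 ≤ ∑ i, g i T₀ := hgT₀ ▸ Finset.single_le_sum
    (fun i _ => (hpos i T₀ (hdom hT₀ i)).le) (Finset.mem_univ i₀)
  obtain ⟨T', hT', hsum⟩ := isPreconnected_Ioi.intermediate_value
    ((hLT i₀).trans_le (hj i₀)) hT₀ hcont ⟨hlow, hhigh⟩
  exact ⟨T', hdom hT', hsum⟩

end SumOfInverses

section Minimax

variable {ι : Type*} [Fintype ι] {φ : ι → ℝ → ℝ} {γ γ' : ι → ℝ} {T : ℝ}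

theorem le_iSup_of_sum_le [Nonempty ι] (hφ : ∀ i, StrictAntiOn (φ i) (Ioi 0))
    (hγ : ∀ i, 0 < γ i) (hγT : ∀ i, φ i (γ i) = T) (hγ' : ∀ i, 0 < γ' i)
    (hsum : ∑ i, γ' i ≤ ∑ i, γ i) : T ≤ ⨆ i, φ i (γ' i) := by
  by_contra! h
  have hlt : ∀ i, γ i < γ' i := fun i => by
    rw [← (hφ i).lt_iff_gt (hγ' i) (hγ i), hγT i]
    exact (le_ciSup ((Set.finite_range _).bddAbove) i).trans_lt h
  exact (Finset.sum_lt_sum_of_nonempty Finset.univ_nonempty fun i _ => hlt i).not_ge hsum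

theorem eq_of_iSup_eq_of_sum_le (hφ : ∀ i, StrictAntiOn (φ i) (Ioi 0))
    (hγ : ∀ i, 0 < γ i) (hγT : ∀ i, φ i (γ i) = T) (hγ' : ∀ i, 0 < γ' i)
    (hsum : ∑ i, γ' i ≤ ∑ i, γ i) (hsup : ⨆ i, φ i (γ' i) = T) : γ' = γ := by
  have hle : ∀ i, γ i ≤ γ' i := fun i => by
    rw [← (hφ i).le_iff_ge (hγ' i) (hγ i), hγT i, ← hsup]
    exact le_ciSup (f := fun i => φ i (γ' i)) (Set.finite_range _).bddAbove i
  have heq := (Finset.sum_eq_sum_iff_of_le fun i _ => hle i).mp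
    ((Finset.sum_le_sum fun i _ => hle i).antisymm hsum)
  exact funext fun i => (heq i (Finset.mem_univ i)).symm

end Minimax

theorem optimal_bandwidth_allocation_general (N : ℕ) (hN : 0 < N)
    (Tcomp d c : Fin N → ℝ) (B : ℝ)
    (hd : ∀ n, 0 < d n) (hc : ∀ n, 0 < c n) (hB : 0 < B)
    (Ttime : Fin N → ℝ → ℝ)
    (hTtime : ∀ n γ, Ttime n γ =
      Tcomp n + d n * Real.log 2 / (B * (γ * Real.log (1 + c n / γ))))
    (γfun : Fin N → ℝ → ℝ)
    (hγfun : ∀ n, ∀ T : ℝ, Tcomp n < T →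
      d n * Real.log 2 / (B * (T - Tcomp n)) < c n →
      (0 < γfun n T ∧
        γfun n T * Real.log (1 + c n / γfun n T) =
          d n * Real.log 2 / (B * (T - Tcomp n))) ∧
      ∀ γ : ℝ, 0 < γ →
        γ * Real.log (1 + c n / γ) = d n * Real.log 2 / (B * (T - Tcomp n)) →
        γ = γfun n T) :
    ∃ Tstar : ℝ,
      -- T* > max_n T_n^comp, and each equation f_{c_n}(γ) = a_n(T*) is solvable
      ((∀ n, Tcomp n < Tstar) ∧
        ∀ n, d n * Real.log 2 / (B * (Tstar - Tcomp n)) < c n) ∧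
      -- Σ_n γ_n(T*) = 1
      (∑ n, γfun n Tstar = 1) ∧
      -- uniqueness of T*
      (∀ T : ℝ, (∀ n, Tcomp n < T) →
        (∀ n, d n * Real.log 2 / (B * (T - Tcomp n)) < c n) →
        ∑ n, γfun n T = 1 → T = Tstar) ∧
      -- the optimal value of the allocation γ* equals T*
      ((⨆ n, Ttime n (γfun n Tstar)) = Tstar) ∧
      -- γ* is the unique minimizer of the round time over feasible allocations
      (∀ γ : Fin N → ℝ, (∀ n, 0 < γ n) → ∑ n, γ n ≤ 1 →
        Tstar ≤ (⨆ n, Ttime n (γ n)) ∧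
        ((⨆ n, Ttime n (γ n)) = Tstar → γ = fun n => γfun n Tstar)) := by
  have : Nonempty (Fin N) := ⟨⟨0, hN⟩⟩
  have hk : ∀ n, 0 < d n * log 2 := fun n => mul_pos (hd n) (log_pos one_lt_two)
  set L : Fin N → ℝ := fun n => Tcomp n + d n * log 2 / (B * c n)
  have hfeasible : ∀ n T, (Tcomp n < T ∧ d n * log 2 / (B * (T - Tcomp n)) < c n) ↔ L n < T :=
    fun n _ => lt_and_div_lt_iff (hk n) hB (hc n)
  have hanti : ∀ n, StrictAntiOn (Ttime n) (Ioi 0) := fun n => by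
    rw [funext (hTtime n)]
    exact strictAntiOn_add_div_fdmaRate (hk n) hB (hc n)
  have hTL : ∀ n, MapsTo (Ttime n) (Ioi 0) (Ioi (L n)) := fun n γ hγ => by
    rw [mem_Ioi, hTtime]
    exact add_div_lt_add_div_fdmaRate (hk n) hB (hc n) hγ
  have hsol : ∀ n T, L n < T → 0 < γfun n T ∧ Ttime n (γfun n T) = T := fun n T hT => by
    obtain ⟨hT₁, hT₂⟩ := (hfeasible n T).mpr hT
    obtain ⟨⟨hpos, hrate⟩, -⟩ := hγfun n T hT₁ hT₂
    exact ⟨hpos, by rw [hTtime, hrate, add_div_mul_div_mul_sub (hk n) hB hT₁]⟩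
  have hmaps : ∀ n, MapsTo (γfun n) (Ioi (L n)) (Ioi 0) := fun n T hT => (hsol n T hT).1
  have hinv : ∀ n, RightInvOn (γfun n) (Ttime n) (Ioi (L n)) := fun n T hT => (hsol n T hT).2
  have hγanti := fun n => (hanti n).strictAntiOn_of_rightInvOn (hmaps n) (hinv n)
  obtain ⟨Tstar, hTstar, hsum⟩ := exists_sum_eq_one hγanti
    fun n => ((hanti n).bijOn_of_rightInvOn (hTL n) (hmaps n) (hinv n)).image_eq
  have hpos := fun n => (hsol n Tstar (hTstar n)).1
  have hval := fun n => (hsol n Tstar (hTstar n)).2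
  refine ⟨Tstar, forall_and.mp fun n => (hfeasible n Tstar).mpr (hTstar n), hsum, ?_, ?_, ?_⟩
  · intro T h₁ h₂ hT
    exact (strictAntiOn_sum hγanti).injOn (fun n => (hfeasible n T).mp ⟨h₁ n, h₂ n⟩) hTstar
      (hT.trans hsum.symm)
  · simp only [hval, ciSup_const]
  · intro γ hγ hγsum
    exact ⟨le_iSup_of_sum_le hanti hpos hval hγ (hγsum.trans hsum.ge),
      eq_of_iSup_eq_of_sum_le hanti hpos hval hγ (hγsum.trans hsum.ge)⟩

/-- Theorem 2 of the paper.  Consider `N` UAVs with computation times `T_n^comp ≥ 0`,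
payloads `d_n > 0`, total bandwidth `B > 0` and SNR constants `c_n > 0`, and completion
times `T_n(γ) = T_n^comp + d_n·ln 2/(B·f_{c_n}(γ))` with `f_c(γ) = γ ln(1 + c/γ)`.
Suppose some `T > max_n T_n^comp` satisfies `d_n·ln 2/(B(T − T_n^comp)) < c_n` for all
`n`, and let `γfun n T` be the unique `γ > 0` with
`f_{c_n}(γ) = d_n·ln 2/(B(T − T_n^comp))` (whenever this equation is solvable).
Then there is a unique such `T*` with `Σ_n γfun n T* = 1`; moreover the allocation
`γ*_n = γfun n T*` is the unique minimizer of `max_n T_n(γ_n)` over all `γ ∈ (0,∞)^N`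
with `Σ_n γ_n ≤ 1`, and the optimal value equals `T*`. -/
theorem optimal_bandwidth_allocation (N : ℕ) (hN : 0 < N)
    (Tcomp d c : Fin N → ℝ) (B : ℝ)
    (hTcomp : ∀ n, 0 ≤ Tcomp n) (hd : ∀ n, 0 < d n) (hc : ∀ n, 0 < c n) (hB : 0 < B)
    (Ttime : Fin N → ℝ → ℝ)
    (hTtime : ∀ n γ, Ttime n γ =
      Tcomp n + d n * Real.log 2 / (B * (γ * Real.log (1 + c n / γ))))
    (hfeas : ∃ T : ℝ, (∀ n, Tcomp n < T) ∧
      ∀ n, d n * Real.log 2 / (B * (T - Tcomp n)) < c n)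
    (γfun : Fin N → ℝ → ℝ)
    (hγfun : ∀ n, ∀ T : ℝ, Tcomp n < T →
      d n * Real.log 2 / (B * (T - Tcomp n)) < c n →
      (0 < γfun n T ∧
        γfun n T * Real.log (1 + c n / γfun n T) =
          d n * Real.log 2 / (B * (T - Tcomp n))) ∧
      ∀ γ : ℝ, 0 < γ →
        γ * Real.log (1 + c n / γ) = d n * Real.log 2 / (B * (T - Tcomp n)) →
        γ = γfun n T) :
    ∃ Tstar : ℝ,
      -- T* > max_n T_n^comp, and each equation f_{c_n}(γ) = a_n(T*) is solvable
      ((∀ n, Tcomp n < Tstar) ∧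
        ∀ n, d n * Real.log 2 / (B * (Tstar - Tcomp n)) < c n) ∧
      -- Σ_n γ_n(T*) = 1
      (∑ n, γfun n Tstar = 1) ∧
      -- uniqueness of T*
      (∀ T : ℝ, (∀ n, Tcomp n < T) →
        (∀ n, d n * Real.log 2 / (B * (T - Tcomp n)) < c n) →
        ∑ n, γfun n T = 1 → T = Tstar) ∧
      -- the optimal value of the allocation γ* equals T*
      ((⨆ n, Ttime n (γfun n Tstar)) = Tstar) ∧
      -- γ* is the unique minimizer of the round time over feasible allocations
      (∀ γ : Fin N → ℝ, (∀ n, 0 < γ n) → ∑ n, γ n ≤ 1 →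
        Tstar ≤ (⨆ n, Ttime n (γ n)) ∧
        ((⨆ n, Ttime n (γ n)) = Tstar → γ = fun n => γfun n Tstar)) :=
  optimal_bandwidth_allocation_general N hN Tcomp d c B hd hc hB Ttime hTtime γfun hγfun
end

section
/- Consider N UAVs with computation times T_n^{comp} ≥ 0, payload sizes d_n > 0, bandwidth B > 0 and SNR constants c_n > 0, with completion times T_n(γ_n) = T_n^{comp} + d_n·ln 2/(B·f_{c_n}(γ_n)) for γ_n > 0. If γ* ∈ (0,∞)^N minimizes the round time max_{1≤n≤N} T_n(γ_n) subject to Σ_{n=1}^N γ_n ≤ 1, then the full bandwidth is used, Σ_{n=1}^N γ*_n = 1, and all completion times are equal: T_1(γ*_1) = T_2(γ*_2) = ⋯ = T_N(γ*_N). -/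
/-!
Since `γ ↦ γ ln(1 + c/γ)` is strictly increasing (its derivative `ln(1 + t) - t/(1 + t)`, with
`t = c/γ`, is positive), every completion time is a continuous, strictly decreasing function of
its bandwidth share. Unused bandwidth, spread evenly over all UAVs, would lower every completion
time and hence the round time. A UAV finishing strictly before the round time could give up a
little bandwidth without raising the round time, giving a minimizer that leaves bandwidth unused.
-/

open Real Set Filter Topology

lemma div_one_add_lt_log_one_add {t : ℝ} (ht : 0 < t) : t / (1 + t) < log (1 + t) :=
  calc t / (1 + t) ≤ 2 * t / (t + 2) := by
        rw [div_le_div_iff₀ (by positivity) (by positivity)]; nlinarith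
    _ < log (1 + t) := lt_log_one_add_of_pos ht

lemma hasDerivAt_mul_log_one_add_div {c x : ℝ} (hc : 0 ≤ c) (hx : 0 < x) :
    HasDerivAt (fun γ => γ * log (1 + c / γ))
      (log (1 + c / x) - c / x / (1 + c / x)) x := by
  have h1 : 0 < 1 + c / x := by positivity
  have hdiv : HasDerivAt (fun γ => 1 + c / γ) (-c / x ^ 2) x := by
    simpa [div_eq_mul_inv] using ((hasDerivAt_inv hx.ne').const_mul c).const_add 1
  refine ((hasDerivAt_id' x).mul (hdiv.log h1.ne')).congr_deriv ?_
  field_simp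
  ring

lemma strictMonoOn_mul_log_one_add_div {c : ℝ} (hc : 0 < c) :
    StrictMonoOn (fun γ => γ * log (1 + c / γ)) (Ioi 0) := by
  refine strictMonoOn_of_hasDerivWithinAt_pos (convex_Ioi 0) ?_
    (fun x hx => (hasDerivAt_mul_log_one_add_div hc.le (interior_subset hx)).hasDerivWithinAt)
    (fun x hx => sub_pos.2 (div_one_add_lt_log_one_add (div_pos hc (interior_subset hx))))
  exact fun x hx => (hasDerivAt_mul_log_one_add_div hc.le hx).continuousAt.continuousWithinAt

lemma mul_log_one_add_div_pos {c γ : ℝ} (hc : 0 < c) (hγ : 0 < γ) :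
    0 < γ * log (1 + c / γ) :=
  mul_pos hγ (log_pos (lt_add_of_pos_right 1 (div_pos hc hγ)))

lemma strictAntiOn_completionTime (a : ℝ) {b B c : ℝ} (hb : 0 < b) (hB : 0 < B) (hc : 0 < c) :
    StrictAntiOn (fun γ => a + b / (B * (γ * log (1 + c / γ)))) (Ioi 0) := by
  intro x hx y hy hxy
  have hlt := strictMonoOn_mul_log_one_add_div hc hx hy hxy
  have hpos := mul_log_one_add_div_pos hc hx
  dsimp only
  gcongr

lemma continuousOn_completionTime (a b : ℝ) {B c : ℝ} (hB : 0 < B) (hc : 0 < c) :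
    ContinuousOn (fun γ => a + b / (B * (γ * log (1 + c / γ)))) (Ioi 0) := by
  intro x hx
  have h := (hasDerivAt_mul_log_one_add_div hc.le hx).continuousAt
  exact (continuousAt_const.add (continuousAt_const.div (continuousAt_const.mul h)
    (mul_pos hB (mul_log_one_add_div_pos hc hx)).ne')).continuousWithinAt

def feasibleAllocations (ι : Type*) [Fintype ι] : Set (ι → ℝ) :=
  {y | (∀ i, 0 < y i) ∧ ∑ i, y i ≤ 1}

section RoundTime

variable {ι : Type*} [Fintype ι] [Nonempty ι] {g : ι → ℝ → ℝ} {x : ι → ℝ}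

theorem sum_eq_one_of_isMinOn_iSup (hg : ∀ i, StrictAntiOn (g i) (Ioi 0))
    (hx : x ∈ feasibleAllocations ι)
    (hmin : IsMinOn (fun y => ⨆ i, g i (y i)) (feasibleAllocations ι) x) :
    ∑ i, x i = 1 := by
  by_contra hne
  set ε := (1 - ∑ i, x i) / Fintype.card ι
  have hε : 0 < ε := div_pos (sub_pos.2 (hx.2.lt_of_ne hne)) (Nat.cast_pos.2 Fintype.card_pos)
  set y : ι → ℝ := fun i => x i + ε
  have hy : y ∈ feasibleAllocations ι := by
    refine ⟨fun i => add_pos (hx.1 i) hε, le_of_eq ?_⟩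
    simp only [y, ε, Finset.sum_add_distrib, Finset.sum_const, Finset.card_univ, nsmul_eq_mul]
    field_simp
    ring
  obtain ⟨j, hj⟩ : ∃ j, g j (y j) = ⨆ i, g i (y i) := exists_eq_ciSup_of_finite
  have hxy : ⨆ i, g i (x i) ≤ ⨆ i, g i (y i) := hmin hy
  have hyx : g j (y j) < g j (x j) := hg j (hx.1 j) (hy.1 j) (lt_add_of_pos_right _ hε)
  linarith [le_ciSup (Finite.bddAbove_range fun i => g i (x i)) j]

theorem eq_iSup_of_isMinOn_iSup (hg : ∀ i, StrictAntiOn (g i) (Ioi 0))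
    (hcont : ∀ i, ContinuousOn (g i) (Ioi 0)) (hx : x ∈ feasibleAllocations ι)
    (hmin : IsMinOn (fun y => ⨆ i, g i (y i)) (feasibleAllocations ι) x) (k : ι) :
    g k (x k) = ⨆ i, g i (x i) := by
  classical
  set M := ⨆ i, g i (x i)
  by_contra hk
  have hkM : g k (x k) < M := (le_ciSup (Finite.bddAbove_range fun i => g i (x i)) k).lt_of_ne hk
  obtain ⟨t, htM, ht⟩ : ∃ t, g k t < M ∧ t ∈ Ioo 0 (x k) :=
    ((((hcont k).continuousAt (Ioi_mem_nhds (hx.1 k))).eventually_lt continuousAt_const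
      hkM).filter_mono nhdsWithin_le_nhds |>.and (Ioo_mem_nhdsLT (hx.1 k))).exists
  set x' := Function.update x k t
  have hx'_le : ∀ i, x' i ≤ x i := by
    intro i
    rcases eq_or_ne i k with rfl | hi
    · simpa [x'] using ht.2.le
    · simp [x', hi]
  have hx' : x' ∈ feasibleAllocations ι := by
    refine ⟨fun i => ?_, (Finset.sum_le_sum fun i _ => hx'_le i).trans hx.2⟩
    rcases eq_or_ne i k with rfl | hi
    · simpa [x'] using ht.1
    · simpa [x', hi] using hx.1 i
  have hmin' : IsMinOn (fun y => ⨆ i, g i (y i)) (feasibleAllocations ι) x' := by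
    refine isMinOn_iff.mpr fun y hy => le_trans (ciSup_le fun i => ?_) (hmin hy)
    rcases eq_or_ne i k with rfl | hi
    · simpa [x'] using htM.le
    · simpa [x', hi] using le_ciSup (Finite.bddAbove_range fun i => g i (x i)) i
  have hsum_lt : ∑ i, x' i < ∑ i, x i :=
    Finset.sum_lt_sum (fun i _ => hx'_le i) ⟨k, Finset.mem_univ k, by simpa [x'] using ht.2⟩
  linarith [sum_eq_one_of_isMinOn_iSup hg hx' hmin', hx.2]

end RoundTime

theorem optimal_allocation_full_bandwidth_equal_times_general (N : ℕ) (hN : 0 < N)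
    (Tcomp d c : Fin N → ℝ) (B : ℝ)
    (hd : ∀ n, 0 < d n) (hc : ∀ n, 0 < c n) (hB : 0 < B)
    (Ttime : Fin N → ℝ → ℝ)
    (hTtime : ∀ n γ, Ttime n γ =
      Tcomp n + d n * Real.log 2 / (B * (γ * Real.log (1 + c n / γ))))
    (γstar : Fin N → ℝ) (hpos : ∀ n, 0 < γstar n) (hsum : ∑ n, γstar n ≤ 1)
    (hmin : ∀ γ : Fin N → ℝ, (∀ n, 0 < γ n) → ∑ n, γ n ≤ 1 →
      (⨆ n, Ttime n (γstar n)) ≤ ⨆ n, Ttime n (γ n)) :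
    (∑ n, γstar n = 1) ∧ ∀ n m : Fin N, Ttime n (γstar n) = Ttime m (γstar m) := by
  have : Nonempty (Fin N) := ⟨⟨0, hN⟩⟩
  have hT n : Ttime n = _ := funext (hTtime n)
  have hanti n : StrictAntiOn (Ttime n) (Ioi 0) := hT n ▸
    strictAntiOn_completionTime (Tcomp n) (mul_pos (hd n) (log_pos one_lt_two)) hB (hc n)
  have hcont n : ContinuousOn (Ttime n) (Ioi 0) := hT n ▸
    continuousOn_completionTime (Tcomp n) (d n * log 2) hB (hc n)
  have hx : γstar ∈ feasibleAllocations (Fin N) := ⟨hpos, hsum⟩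
  have hmin' : IsMinOn (fun γ => ⨆ n, Ttime n (γ n)) (feasibleAllocations (Fin N)) γstar :=
    isMinOn_iff.mpr fun γ hγ => hmin γ hγ.1 hγ.2
  refine ⟨sum_eq_one_of_isMinOn_iSup hanti hx hmin', fun n m => ?_⟩
  rw [eq_iSup_of_isMinOn_iSup hanti hcont hx hmin' n,
    eq_iSup_of_isMinOn_iSup hanti hcont hx hmin' m]

/-- If an allocation `γ* ∈ (0,∞)^N` with `Σ_n γ*_n ≤ 1` minimizes the round time
`max_n T_n(γ_n)`, where `T_n(γ) = T_n^comp + d_n·ln 2/(B·f_{c_n}(γ))`, then the full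
bandwidth is used (`Σ_n γ*_n = 1`) and all completion times are equal. -/
theorem optimal_allocation_full_bandwidth_equal_times (N : ℕ) (hN : 0 < N)
    (Tcomp d c : Fin N → ℝ) (B : ℝ)
    (hTcomp : ∀ n, 0 ≤ Tcomp n) (hd : ∀ n, 0 < d n) (hc : ∀ n, 0 < c n) (hB : 0 < B)
    (Ttime : Fin N → ℝ → ℝ)
    (hTtime : ∀ n γ, Ttime n γ =
      Tcomp n + d n * Real.log 2 / (B * (γ * Real.log (1 + c n / γ))))
    (γstar : Fin N → ℝ) (hpos : ∀ n, 0 < γstar n) (hsum : ∑ n, γstar n ≤ 1)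
    (hmin : ∀ γ : Fin N → ℝ, (∀ n, 0 < γ n) → ∑ n, γ n ≤ 1 →
      (⨆ n, Ttime n (γstar n)) ≤ ⨆ n, Ttime n (γ n)) :
    (∑ n, γstar n = 1) ∧ ∀ n m : Fin N, Ttime n (γstar n) = Ttime m (γstar m) :=
  optimal_allocation_full_bandwidth_equal_times_general N hN Tcomp d c B hd hc hB Ttime hTtime γstar
    hpos hsum hmin
end

section
/- Let f : ℝ^d → ℝ be differentiable with ‖∇f(w)‖ ≤ ε for all w. On a probability space, let w^0 ∈ ℝ^d be fixed and define iterates w^{k+1} = w^k − η·g_k for k = 0,…,K−1, where each stochastic gradient g_k satisfies E[g_k ∣ w^0,…,w^k] = ∇f(w^k) and E[‖g_k − ∇f(w^k)‖² ∣ w^0,…,w^k] ≤ σ². Then the local model drift satisfies E[‖w^k − w^0‖²] ≤ η²·k²·(ε² + σ²) for every k ≤ K. -/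
/-!
Write `g = a + ξ` with `a = E[g | 𝔪] = ∇f(w)` and `ξ` the gradient noise. Since `a` is
`𝔪`-measurable and bounded while `E[ξ | 𝔪] = 0`, the pull-out property kills the cross term, so
`E‖g‖² = E‖a‖² + E‖ξ‖² ≤ ε² + σ²`. The drift `w^k − w^0 = −η ∑_{j<k} g_j` is then controlled by
`‖∑_{j<k} g_j‖² ≤ k ∑_{j<k} ‖g_j‖²`.
-/

open MeasureTheory Finset
open scoped RealInnerProductSpace

section ConditionalNoise

variable {Ω E : Type*} {m m₀ : MeasurableSpace Ω} {μ : Measure Ω}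
  [NormedAddCommGroup E] [InnerProductSpace ℝ E] {g a : Ω → E} {C : ℝ}

lemma integrable_of_condExp_eq_of_bound [IsFiniteMeasure μ] (hm : m ≤ m₀)
    (hga : μ[g | m] =ᵐ[μ] a) (haC : ∀ᵐ ω ∂μ, ‖a ω‖ ≤ C) : Integrable a μ :=
  (integrable_const C).mono'
    ((stronglyMeasurable_condExp.mono hm).aestronglyMeasurable.congr hga) haC

lemma integrable_norm_sq_of_condExp_eq [IsFiniteMeasure μ] (hm : m ≤ m₀) (hg : Integrable g μ)
    (hga : μ[g | m] =ᵐ[μ] a) (haC : ∀ᵐ ω ∂μ, ‖a ω‖ ≤ C)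
    (hga₂ : Integrable (fun ω ↦ ‖g ω - a ω‖ ^ 2) μ) :
    Integrable (fun ω ↦ ‖g ω‖ ^ 2) μ := by
  have ha_int := integrable_of_condExp_eq_of_bound hm hga haC
  have hnoise : MemLp (g - a) 2 μ :=
    (memLp_two_iff_integrable_sq_norm (hg.sub ha_int).1).2 hga₂
  have hsum := (MemLp.of_bound ha_int.1 C haC).add hnoise
  rw [add_sub_cancel] at hsum
  exact (memLp_two_iff_integrable_sq_norm hg.1).1 hsum

variable [CompleteSpace E]

lemma integral_inner_eq_zero_of_condExp_eq_zero [IsFiniteMeasure μ] (hm : m ≤ m₀) {ξ : Ω → E}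
    (ha : AEStronglyMeasurable[m] a μ) (haC : ∀ᵐ ω ∂μ, ‖a ω‖ ≤ C)
    (hξ : Integrable ξ μ) (hξ₀ : μ[ξ | m] =ᵐ[μ] 0) :
    ∫ ω, ⟪a ω, ξ ω⟫ ∂μ = 0 := by
  rw [← integral_condExp hm]
  refine integral_eq_zero_of_ae ?_
  filter_upwards [condExp_aestronglyMeasurable_bilin_of_bound (innerSL ℝ) hm ha hξ C haC, hξ₀]
    with ω hpull hzero
  exact hpull.trans (by simp [hzero])

lemma condExp_sub_eq_zero_of_condExp_eq [IsFiniteMeasure μ] (hm : m ≤ m₀) (hg : Integrable g μ)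
    (hga : μ[g | m] =ᵐ[μ] a) (haC : ∀ᵐ ω ∂μ, ‖a ω‖ ≤ C) : μ[g - a | m] =ᵐ[μ] 0 := by
  have ha : AEStronglyMeasurable[m] a μ := ⟨_, stronglyMeasurable_condExp, hga.symm⟩
  have ha_int := integrable_of_condExp_eq_of_bound hm hga haC
  filter_upwards [condExp_sub hg ha_int m, condExp_of_aestronglyMeasurable' hm ha ha_int, hga]
    with ω hsub ha_eq hga_eq
  simp [hsub, ha_eq, hga_eq]

lemma integral_norm_sq_eq_add_of_condExp_eq [IsFiniteMeasure μ] (hm : m ≤ m₀)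
    (hg : Integrable g μ) (hga : μ[g | m] =ᵐ[μ] a) (haC : ∀ᵐ ω ∂μ, ‖a ω‖ ≤ C)
    (hga₂ : Integrable (fun ω ↦ ‖g ω - a ω‖ ^ 2) μ) :
    ∫ ω, ‖g ω‖ ^ 2 ∂μ = ∫ ω, ‖a ω‖ ^ 2 ∂μ + ∫ ω, ‖g ω - a ω‖ ^ 2 ∂μ := by
  have ha : AEStronglyMeasurable[m] a μ := ⟨_, stronglyMeasurable_condExp, hga.symm⟩
  have ha_int := integrable_of_condExp_eq_of_bound hm hga haC
  have ha₂ : Integrable (fun ω ↦ ‖a ω‖ ^ 2) μ :=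
    (memLp_two_iff_integrable_sq_norm ha_int.1).1 (.of_bound ha_int.1 C haC)
  have hinner : Integrable (fun ω ↦ 2 * ⟪a ω, g ω - a ω⟫) μ :=
    ((innerSL ℝ).integrable_of_bilin_of_bdd_left C ha_int.1 haC (hg.sub ha_int)).const_mul 2
  calc ∫ ω, ‖g ω‖ ^ 2 ∂μ
      = ∫ ω, ‖a ω‖ ^ 2 + 2 * ⟪a ω, g ω - a ω⟫ + ‖g ω - a ω‖ ^ 2 ∂μ := by
        simp_rw [← norm_add_sq_real, add_sub_cancel]
    _ = ∫ ω, ‖a ω‖ ^ 2 ∂μ + 2 * ∫ ω, ⟪a ω, g ω - a ω⟫ ∂μ + ∫ ω, ‖g ω - a ω‖ ^ 2 ∂μ := by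
        rw [integral_add (f := fun ω ↦ ‖a ω‖ ^ 2 + 2 * ⟪a ω, g ω - a ω⟫) (ha₂.add hinner) hga₂,
          integral_add ha₂ hinner, integral_const_mul]
    _ = ∫ ω, ‖a ω‖ ^ 2 ∂μ + ∫ ω, ‖g ω - a ω‖ ^ 2 ∂μ := by
        rw [integral_inner_eq_zero_of_condExp_eq_zero (ξ := fun ω ↦ g ω - a ω) hm ha haC
          (hg.sub ha_int) (condExp_sub_eq_zero_of_condExp_eq hm hg hga haC), mul_zero, add_zero]

lemma integral_norm_sq_le_of_condExp_eq [IsProbabilityMeasure μ] (hm : m ≤ m₀)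
    (hg : Integrable g μ) (hga : μ[g | m] =ᵐ[μ] a) {ε σ : ℝ} (haε : ∀ᵐ ω ∂μ, ‖a ω‖ ≤ ε)
    (hga₂ : Integrable (fun ω ↦ ‖g ω - a ω‖ ^ 2) μ)
    (hvar : ∀ᵐ ω ∂μ, μ[fun ω ↦ ‖g ω - a ω‖ ^ 2 | m] ω ≤ σ ^ 2) :
    ∫ ω, ‖g ω‖ ^ 2 ∂μ ≤ ε ^ 2 + σ ^ 2 := by
  rw [integral_norm_sq_eq_add_of_condExp_eq hm hg hga haε hga₂,
    ← integral_condExp hm (f := fun ω ↦ ‖g ω - a ω‖ ^ 2)]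
  gcongr
  · calc ∫ ω, ‖a ω‖ ^ 2 ∂μ ≤ ∫ _, ε ^ 2 ∂μ :=
          integral_mono_of_nonneg (.of_forall fun _ ↦ sq_nonneg _) (integrable_const _)
            (haε.mono fun ω h ↦ pow_le_pow_left₀ (norm_nonneg _) h 2)
      _ = ε ^ 2 := by simp
  · calc ∫ ω, μ[fun ω ↦ ‖g ω - a ω‖ ^ 2 | m] ω ∂μ ≤ ∫ _, σ ^ 2 ∂μ :=
          integral_mono_ae integrable_condExp (integrable_const _) hvar
      _ = σ ^ 2 := by simp

end ConditionalNoise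

lemma integral_norm_sum_sq_le {ι Ω E : Type*} [MeasurableSpace Ω] {μ : Measure Ω}
    [SeminormedAddCommGroup E] (s : Finset ι) {X : ι → Ω → E} {M : ℝ}
    (hX : ∀ i ∈ s, Integrable (fun ω ↦ ‖X i ω‖ ^ 2) μ) (hM : ∀ i ∈ s, ∫ ω, ‖X i ω‖ ^ 2 ∂μ ≤ M) :
    ∫ ω, ‖∑ i ∈ s, X i ω‖ ^ 2 ∂μ ≤ #s ^ 2 * M := by
  have hpointwise : ∀ ω, ‖∑ i ∈ s, X i ω‖ ^ 2 ≤ #s * ∑ i ∈ s, ‖X i ω‖ ^ 2 := fun ω ↦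
    (pow_le_pow_left₀ (norm_nonneg _) (norm_sum_le _ _) 2).trans (sq_sum_le_card_mul_sum_sq ..)
  calc ∫ ω, ‖∑ i ∈ s, X i ω‖ ^ 2 ∂μ
      ≤ ∫ ω, #s * ∑ i ∈ s, ‖X i ω‖ ^ 2 ∂μ :=
        integral_mono_of_nonneg (.of_forall fun _ ↦ sq_nonneg _)
          ((integrable_finsetSum s hX).const_mul _) (.of_forall hpointwise)
    _ = #s * ∑ i ∈ s, ∫ ω, ‖X i ω‖ ^ 2 ∂μ := by rw [integral_const_mul, integral_finsetSum s hX]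
    _ ≤ #s * ∑ _i ∈ s, M := by gcongr with i hi; exact hM i hi
    _ = #s ^ 2 * M := by rw [sum_const, nsmul_eq_mul]; ring

theorem sgd_local_drift_bound_general (d : ℕ)
    (f : EuclideanSpace ℝ (Fin d) → ℝ)
    (ε σ η : ℝ)
    (hgrad : ∀ w, ‖gradient f w‖ ≤ ε)
    (Ω : Type*) [inst : MeasurableSpace Ω] (μ : Measure Ω) [IsProbabilityMeasure μ]
    (K : ℕ) (w0 : EuclideanSpace ℝ (Fin d))
    (w : ℕ → Ω → EuclideanSpace ℝ (Fin d))
    (g : ℕ → Ω → EuclideanSpace ℝ (Fin d))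
    (hw0 : ∀ ω, w 0 ω = w0)
    (hrec : ∀ k < K, ∀ ω, w (k + 1) ω = w k ω - η • g k ω)
    -- the σ-algebra generated by `w^0, …, w^k`
    (𝔪 : ℕ → MeasurableSpace Ω)
    (h𝔪le : ∀ k, 𝔪 k ≤ inst)
    (hint : ∀ k < K, Integrable (g k) μ)
    (hint2 : ∀ k < K,
      Integrable (fun ω => ‖g k ω - gradient f (w k ω)‖ ^ 2) μ)
    -- Assumption 1: conditional unbiasedness and bounded conditional variance
    (hunbiased : ∀ k < K,
      μ[g k | 𝔪 k] =ᵐ[μ] fun ω => gradient f (w k ω))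
    (hvar : ∀ k < K, ∀ᵐ ω ∂μ,
      (μ[fun ω' => ‖g k ω' - gradient f (w k ω')‖ ^ 2 | 𝔪 k]) ω ≤ σ ^ 2) :
    ∀ k ≤ K, ∫ ω, ‖w k ω - w0‖ ^ 2 ∂μ ≤ η ^ 2 * (k : ℝ) ^ 2 * (ε ^ 2 + σ ^ 2) := by
  intro k hk
  have hlt : ∀ j ∈ range k, j < K := fun j hj ↦ (mem_range.1 hj).trans_le hk
  have hgrad_ae : ∀ j, ∀ᵐ ω ∂μ, ‖gradient f (w j ω)‖ ≤ ε := fun j ↦ .of_forall fun _ ↦ hgrad _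
  have hdrift : ∀ ω, ‖w k ω - w0‖ ^ 2 = η ^ 2 * ‖∑ j ∈ range k, g j ω‖ ^ 2 := by
    intro ω
    have hsum : w k ω - w0 = -(η • ∑ j ∈ range k, g j ω) := by
      rw [← hw0 ω, ← sum_range_sub (fun j ↦ w j ω), smul_sum, ← sum_neg_distrib]
      refine sum_congr rfl fun j hj ↦ ?_
      rw [hrec j (hlt j hj) ω]
      abel
    rw [hsum, norm_neg, norm_smul, mul_pow, Real.norm_eq_abs, sq_abs]
  have hmoment : ∀ j ∈ range k, Integrable (fun ω ↦ ‖g j ω‖ ^ 2) μ ∧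
      ∫ ω, ‖g j ω‖ ^ 2 ∂μ ≤ ε ^ 2 + σ ^ 2 := fun j hj ↦ by
    have hj := hlt j hj
    exact ⟨integrable_norm_sq_of_condExp_eq (h𝔪le j) (hint j hj) (hunbiased j hj) (hgrad_ae j)
        (hint2 j hj),
      integral_norm_sq_le_of_condExp_eq (h𝔪le j) (hint j hj) (hunbiased j hj) (hgrad_ae j)
        (hint2 j hj) (hvar j hj)⟩
  calc ∫ ω, ‖w k ω - w0‖ ^ 2 ∂μ = η ^ 2 * ∫ ω, ‖∑ j ∈ range k, g j ω‖ ^ 2 ∂μ := by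
        simp_rw [hdrift]
        exact integral_const_mul _ _
    _ ≤ η ^ 2 * (#(range k) ^ 2 * (ε ^ 2 + σ ^ 2)) := by
        gcongr
        exact integral_norm_sum_sq_le _ (fun j hj ↦ (hmoment j hj).1) (fun j hj ↦ (hmoment j hj).2)
    _ = η ^ 2 * (k : ℝ) ^ 2 * (ε ^ 2 + σ ^ 2) := by rw [card_range, mul_assoc]

/-- Local model drift of `K` steps of mini-batch SGD.  If `f : ℝ^d → ℝ` is
differentiable with `‖∇f(w)‖ ≤ ε` everywhere, the iterates satisfy
`w^{k+1} = w^k − η g_k` starting from the deterministic `w^0 = w0`, and each stochastic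
gradient `g_k` is unbiased given `w^0, …, w^k` with conditional variance at most `σ²`,
then `E‖w^k − w^0‖² ≤ η² k² (ε² + σ²)` for every `k ≤ K`. -/
theorem sgd_local_drift_bound (d : ℕ)
    (f : EuclideanSpace ℝ (Fin d) → ℝ) (hf : Differentiable ℝ f)
    (ε σ η : ℝ) (hη : 0 < η)
    (hgrad : ∀ w, ‖gradient f w‖ ≤ ε)
    (Ω : Type*) [inst : MeasurableSpace Ω] (μ : Measure Ω) [IsProbabilityMeasure μ]
    (K : ℕ) (w0 : EuclideanSpace ℝ (Fin d))
    (w : ℕ → Ω → EuclideanSpace ℝ (Fin d))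
    (g : ℕ → Ω → EuclideanSpace ℝ (Fin d))
    (hw0 : ∀ ω, w 0 ω = w0)
    (hrec : ∀ k < K, ∀ ω, w (k + 1) ω = w k ω - η • g k ω)
    -- the σ-algebra generated by `w^0, …, w^k`
    (𝔪 : ℕ → MeasurableSpace Ω)
    (h𝔪 : ∀ k, 𝔪 k = ⨆ i : Fin (k + 1),
      MeasurableSpace.comap (fun ω => w i ω) inferInstance)
    (h𝔪le : ∀ k, 𝔪 k ≤ inst)
    (hint : ∀ k < K, Integrable (g k) μ)
    (hint2 : ∀ k < K,
      Integrable (fun ω => ‖g k ω - gradient f (w k ω)‖ ^ 2) μ)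
    -- Assumption 1: conditional unbiasedness and bounded conditional variance
    (hunbiased : ∀ k < K,
      μ[g k | 𝔪 k] =ᵐ[μ] fun ω => gradient f (w k ω))
    (hvar : ∀ k < K, ∀ᵐ ω ∂μ,
      (μ[fun ω' => ‖g k ω' - gradient f (w k ω')‖ ^ 2 | 𝔪 k]) ω ≤ σ ^ 2) :
    ∀ k ≤ K, ∫ ω, ‖w k ω - w0‖ ^ 2 ∂μ ≤ η ^ 2 * (k : ℝ) ^ 2 * (ε ^ 2 + σ ^ 2) :=
  sgd_local_drift_bound_general d f ε σ η hgrad Ω (inst := inst) μ K w0 w g hw0 hrec 𝔪 h𝔪le hint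
    hint2 hunbiased hvar
end
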